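/- Let x_1, …, x_n ∈ ℝ^d, b : ℕ → ℝ, and H be as in the multivariate learning setup (unit-norm data, b_0 ≥ 1, b_k ≥ 1/k² for k ≥ 1, Σ_k b_k < ∞, H positive definite). Let g and h be functions given by multivariate power-series families with auxiliary functions g̃ and h̃, and suppose g̃(1), g̃′(1), h̃(1), h̃′(1) are all finite. Define y ∈ ℝⁿ by y_a = g(x_a)·h(x_a). Then √(yᵀ H⁻¹ y) ≤ g̃′(1) h̃(1) + g̃(1) h̃′(1) + g̃(0) h̃(0). -/

import Mathlib

open Matrix
open scoped RealInnerProductSpace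

/-- The `k`-th auxiliary coefficient `ãₖ = ∑_v |a_{k,v}| ∏ᵢ ‖β_{k,v,i}‖` of a
multivariate power-series family. -/
noncomputable def auxCoef (d : ℕ) (a : ℕ → ℕ → ℝ)
    (β : (k : ℕ) → ℕ → Fin k → EuclideanSpace ℝ (Fin d)) (k : ℕ) : ℝ :=
  ∑' v : ℕ, |a k v| * ∏ i : Fin k, ‖β k v i‖

/-- The function `x ↦ ∑_k ∑_v a_{k,v} ∏ᵢ ⟪β_{k,v,i}, x⟫` represented by a
multivariate power-series family. -/
noncomputable def familyFun (d : ℕ) (a : ℕ → ℕ → ℝ)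
    (β : (k : ℕ) → ℕ → Fin k → EuclideanSpace ℝ (Fin d))
    (x : EuclideanSpace ℝ (Fin d)) : ℝ :=
  ∑' k : ℕ, ∑' v : ℕ, a k v * ∏ i : Fin k, ⟪β k v i, x⟫

/-!
Put `z = H⁻¹ y` and `Φ_K = ∑_c z_c x_c^{⊗K}`, a vector in the `K`-th tensor power of `ℝ^d`.
Then `yᵀ H⁻¹ y = zᵀ H z = ∑_K b_K ‖Φ_K‖²`, so the lower bounds on `b` give
`‖Φ_K‖ ≤ max K 1 · √(yᵀ H⁻¹ y)`.

On the other hand `yᵀ H⁻¹ y = ∑_c z_c g(x_c) h(x_c)`. A product of two monomials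
`∏ ⟪β_i, x⟫ · ∏ ⟪γ_j, x⟫` of total degree `K` equals `⟪β ⊗ γ, x^{⊗K}⟫`, so by Cauchy–Schwarz its
contribution is at most `∏ ‖β_i‖ ∏ ‖γ_j‖ ‖Φ_K‖`. Grouping `gh` by total degree, the weights form
the Cauchy product `c_K` of `ã` and `h̃`, and
`∑_K max K 1 · c_K = (g̃h̃)′(1) + g̃(0) h̃(0) = g̃′(1) h̃(1) + g̃(1) h̃′(1) + g̃(0) h̃(0)`.
Hence `yᵀ H⁻¹ y ≤ M √(yᵀ H⁻¹ y)` with `M` the claimed bound.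
-/

open Finset

section TensorPower

variable {ι m : Type*} [Fintype ι] [Fintype m]

noncomputable def pureTensor {K : ℕ} (β : Fin K → EuclideanSpace ℝ ι) :
    EuclideanSpace ℝ (Fin K → ι) :=
  WithLp.toLp 2 fun f => ∏ i, β i (f i)

lemma inner_pureTensor {K : ℕ} (β γ : Fin K → EuclideanSpace ℝ ι) :
    ⟪pureTensor β, pureTensor γ⟫ = ∏ i, ⟪β i, γ i⟫ := by
  simp only [PiLp.inner_apply, RCLike.inner_apply, conj_trivial, pureTensor]
  rw [prod_univ_sum]
  exact sum_congr rfl fun f _ => prod_mul_distrib.symm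

lemma norm_pureTensor {K : ℕ} (β : Fin K → EuclideanSpace ℝ ι) :
    ‖pureTensor β‖ = ∏ i, ‖β i‖ := by
  refine (sq_eq_sq₀ (norm_nonneg _) (prod_nonneg fun i _ => norm_nonneg _)).1 ?_
  rw [← real_inner_self_eq_norm_sq, inner_pureTensor, ← prod_pow]
  exact prod_congr rfl fun i _ => real_inner_self_eq_norm_sq _

noncomputable def tensorPowerSum (x : m → EuclideanSpace ℝ ι) (z : m → ℝ) (K : ℕ) :
    EuclideanSpace ℝ (Fin K → ι) :=
  ∑ c, z c • pureTensor fun _ : Fin K => x c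

lemma inner_pureTensor_tensorPowerSum {K : ℕ} (x : m → EuclideanSpace ℝ ι) (z : m → ℝ)
    (β : Fin K → EuclideanSpace ℝ ι) :
    ⟪pureTensor β, tensorPowerSum x z K⟫ = ∑ c, z c * ∏ i, ⟪β i, x c⟫ := by
  simp only [tensorPowerSum, inner_sum, real_inner_smul_right, inner_pureTensor]

lemma norm_tensorPowerSum_sq (x : m → EuclideanSpace ℝ ι) (z : m → ℝ) (K : ℕ) :
    ‖tensorPowerSum x z K‖ ^ 2 = ∑ a, ∑ c, z a * z c * ⟪x a, x c⟫ ^ K := by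
  rw [← real_inner_self_eq_norm_sq]
  simp only [tensorPowerSum, sum_inner, inner_sum, real_inner_smul_left, real_inner_smul_right,
    inner_pureTensor, prod_const, card_univ, Fintype.card_fin]
  exact sum_congr rfl fun a _ => sum_congr rfl fun c _ => by rw [real_inner_comm]; ring

lemma norm_tensorPowerSum_le {x : m → EuclideanSpace ℝ ι} (hx : ∀ c, ‖x c‖ ≤ 1)
    (z : m → ℝ) (K : ℕ) : ‖tensorPowerSum x z K‖ ≤ ∑ c, |z c| := by
  refine (norm_sum_le _ _).trans (sum_le_sum fun c _ => ?_)
  rw [norm_smul, norm_pureTensor, Real.norm_eq_abs]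
  exact mul_le_of_le_one_right (abs_nonneg _)
    (prod_le_one (fun _ _ => norm_nonneg _) fun _ _ => hx c)

lemma abs_sum_mul_prod_inner_le {K : ℕ} (x : m → EuclideanSpace ℝ ι) (z : m → ℝ)
    (β : Fin K → EuclideanSpace ℝ ι) :
    |∑ c, z c * ∏ i, ⟪β i, x c⟫| ≤ (∏ i, ‖β i‖) * ‖tensorPowerSum x z K‖ := by
  rw [← inner_pureTensor_tensorPowerSum, ← norm_pureTensor]
  exact abs_real_inner_le_norm _ _

lemma hasSum_dotProduct_mulVec (x : m → EuclideanSpace ℝ ι) (b : ℕ → ℝ) (H : Matrix m m ℝ)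
    (hH : ∀ a c, HasSum (fun K => b K * ⟪x a, x c⟫ ^ K) (H a c)) (z : m → ℝ) :
    HasSum (fun K => b K * ‖tensorPowerSum x z K‖ ^ 2) (z ⬝ᵥ (H *ᵥ z)) := by
  have h := hasSum_sum fun a (_ : a ∈ univ) => hasSum_sum fun c (_ : c ∈ univ) =>
    (hH a c).mul_left (z a * z c)
  have hterm : (fun K => b K * ‖tensorPowerSum x z K‖ ^ 2) =
      fun K => ∑ a, ∑ c, z a * z c * (b K * ⟪x a, x c⟫ ^ K) := by
    ext K
    simp only [norm_tensorPowerSum_sq, mul_sum]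
    exact sum_congr rfl fun a _ => sum_congr rfl fun c _ => by ring
  have hsum : z ⬝ᵥ (H *ᵥ z) = ∑ a, ∑ c, z a * z c * H a c := by
    simp only [dotProduct, mulVec, mul_sum]
    exact sum_congr rfl fun a _ => sum_congr rfl fun c _ => by ring
  rwa [hterm, hsum]

lemma hasSum_dotProduct_inv_mulVec [DecidableEq m] (x : m → EuclideanSpace ℝ ι) (b : ℕ → ℝ)
    {H : Matrix m m ℝ} (hH : ∀ a c, HasSum (fun K => b K * ⟪x a, x c⟫ ^ K) (H a c))
    (hdet : IsUnit H.det) (y : m → ℝ) :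
    HasSum (fun K => b K * ‖tensorPowerSum x (H⁻¹ *ᵥ y) K‖ ^ 2) (y ⬝ᵥ (H⁻¹ *ᵥ y)) := by
  have h := hasSum_dotProduct_mulVec x b H hH (H⁻¹ *ᵥ y)
  rwa [mulVec_mulVec, mul_nonsing_inv H hdet, one_mulVec, dotProduct_comm] at h

end TensorPower

section MonomialSeries

variable {ι m σ τ : Type*} [Fintype ι] [Fintype m]

lemma abs_mul_prod_inner_le {F : Type*} [NormedAddCommGroup F] [InnerProductSpace ℝ F]
    {K : ℕ} {x : F} (hx : ‖x‖ ≤ 1) (a : ℝ) (β : Fin K → F) :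
    |a * ∏ i, ⟪β i, x⟫| ≤ |a| * ∏ i, ‖β i‖ := by
  rw [abs_mul, abs_prod]
  exact mul_le_mul_of_nonneg_left (prod_le_prod (fun _ _ => abs_nonneg _) fun i _ =>
    (abs_real_inner_le_norm _ _).trans (mul_le_of_le_one_right (norm_nonneg _) hx)) (abs_nonneg _)

lemma summable_mul_prod_inner {F : Type*} [NormedAddCommGroup F] [InnerProductSpace ℝ F]
    {K : ℕ} {x : F} (hx : ‖x‖ ≤ 1) {a : σ → ℝ} {β : σ → Fin K → F}
    (hw : Summable fun j => |a j| * ∏ i, ‖β j i‖) :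
    Summable fun j => a j * ∏ i, ⟪β j i, x⟫ :=
  hw.of_norm_bounded fun j => abs_mul_prod_inner_le hx (a j) (β j)

lemma abs_sum_mul_tsum_le {K : ℕ} {x : m → EuclideanSpace ℝ ι} (hx : ∀ c, ‖x c‖ ≤ 1)
    (z : m → ℝ) {a : σ → ℝ} {β : σ → Fin K → EuclideanSpace ℝ ι}
    (hw : Summable fun j => |a j| * ∏ i, ‖β j i‖) :
    |∑ c, z c * ∑' j, a j * ∏ i, ⟪β j i, x c⟫| ≤
      (∑' j, |a j| * ∏ i, ‖β j i‖) * ‖tensorPowerSum x z K‖ := by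
  have hswap : ∑ c, z c * ∑' j, a j * ∏ i, ⟪β j i, x c⟫ =
      ∑' j, a j * ∑ c, z c * ∏ i, ⟪β j i, x c⟫ := by
    simp only [← tsum_mul_left, mul_sum]
    rw [← Summable.tsum_finsetSum fun c _ => (summable_mul_prod_inner (hx c) hw).mul_left (z c)]
    exact tsum_congr fun j => sum_congr rfl fun c _ => by ring
  rw [hswap, ← Real.norm_eq_abs]
  refine tsum_of_norm_bounded (hw.hasSum.mul_right _) fun j => ?_
  rw [Real.norm_eq_abs, abs_mul, mul_assoc]
  exact mul_le_mul_of_nonneg_left (abs_sum_mul_prod_inner_le x z (β j)) (abs_nonneg _)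

lemma prod_append {X M : Type*} [CommMonoid M] {K L : ℕ} (f : X → M) (β : Fin K → X)
    (γ : Fin L → X) : ∏ i, f (Fin.append β γ i) = (∏ i, f (β i)) * ∏ i, f (γ i) := by
  simp only [Fin.prod_univ_add, Fin.append_left, Fin.append_right]

lemma tsum_mul_tsum_prod_append {X : Type*} {K L : ℕ} (f : X → ℝ) {a : σ → ℝ}
    {β : σ → Fin K → X} {a' : τ → ℝ} {β' : τ → Fin L → X}
    (h : Summable fun j => a j * ∏ i, f (β j i)) (h' : Summable fun j => a' j * ∏ i, f (β' j i)) :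
    (∑' j, a j * ∏ i, f (β j i)) * (∑' j, a' j * ∏ i, f (β' j i)) =
      ∑' p : σ × τ, a p.1 * a' p.2 * ∏ i, f (Fin.append (β p.1) (β' p.2) i) := by
  rw [tsum_mul_tsum_of_summable_norm h.norm h'.norm]
  exact tsum_congr fun p => by rw [prod_append]; ring

lemma abs_sum_mul_tsum_mul_tsum_le {K L : ℕ} {x : m → EuclideanSpace ℝ ι} (hx : ∀ c, ‖x c‖ ≤ 1) (z : m → ℝ)
    {a : σ → ℝ} {β : σ → Fin K → EuclideanSpace ℝ ι}
    {a' : τ → ℝ} {β' : τ → Fin L → EuclideanSpace ℝ ι}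
    (hw : Summable fun j => |a j| * ∏ i, ‖β j i‖)
    (hw' : Summable fun j => |a' j| * ∏ i, ‖β' j i‖) :
    |∑ c, z c * ((∑' j, a j * ∏ i, ⟪β j i, x c⟫) * ∑' j, a' j * ∏ i, ⟪β' j i, x c⟫)| ≤
      (∑' j, |a j| * ∏ i, ‖β j i‖) * (∑' j, |a' j| * ∏ i, ‖β' j i‖) *
        ‖tensorPowerSum x z (K + L)‖ := by
  have hprod : ∀ c, (∑' j, a j * ∏ i, ⟪β j i, x c⟫) * (∑' j, a' j * ∏ i, ⟪β' j i, x c⟫) =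
      ∑' p : σ × τ, a p.1 * a' p.2 * ∏ i, ⟪Fin.append (β p.1) (β' p.2) i, x c⟫ := fun c =>
    tsum_mul_tsum_prod_append (⟪·, x c⟫) (summable_mul_prod_inner (hx c) hw)
      (summable_mul_prod_inner (hx c) hw')
  have hweight : (∑' j, |a j| * ∏ i, ‖β j i‖) * (∑' j, |a' j| * ∏ i, ‖β' j i‖) =
      ∑' p : σ × τ, |a p.1 * a' p.2| * ∏ i, ‖Fin.append (β p.1) (β' p.2) i‖ := by
    simp only [abs_mul]
    exact tsum_mul_tsum_prod_append (‖·‖) hw hw'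
  have hw_pair : Summable fun p : σ × τ =>
      |a p.1 * a' p.2| * ∏ i, ‖Fin.append (β p.1) (β' p.2) i‖ :=
    (summable_mul_of_summable_norm hw.norm hw'.norm).congr fun p => by
      simp only [abs_mul, prod_append]
      ring
  simp only [hprod, hweight]
  exact abs_sum_mul_tsum_le hx z hw_pair

end MonomialSeries

lemma hasSum_sum_antidiagonal_mul {u v : ℕ → ℝ} (hu : Summable u) (hv : Summable v) :
    HasSum (fun K => ∑ kl ∈ antidiagonal K, u kl.1 * v kl.2) ((∑' k, u k) * ∑' k, v k) := by
  rw [tsum_mul_tsum_eq_tsum_sum_antidiagonal_of_summable_norm hu.norm hv.norm]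
  exact (summable_norm_sum_mul_antidiagonal_of_summable_norm hu.norm hv.norm).of_norm.hasSum

/-- The Leibniz rule `(uv)'(1) = u'(1) v(1) + u(1) v'(1)` for power series. -/
lemma hasSum_natCast_mul_sum_antidiagonal_mul {u v : ℕ → ℝ} (hu : Summable u)
    (hu' : Summable fun k : ℕ => (k : ℝ) * u k) (hv : Summable v)
    (hv' : Summable fun k : ℕ => (k : ℝ) * v k) :
    HasSum (fun K : ℕ => (K : ℝ) * ∑ kl ∈ antidiagonal K, u kl.1 * v kl.2)
      ((∑' k : ℕ, (k : ℝ) * u k) * (∑' k, v k) + (∑' k, u k) * ∑' k : ℕ, (k : ℝ) * v k) := by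
  convert (hasSum_sum_antidiagonal_mul hu' hv).add (hasSum_sum_antidiagonal_mul hu hv') using 1
  ext K
  rw [mul_sum, ← sum_add_distrib]
  refine sum_congr rfl fun kl hkl => ?_
  rw [← mem_antidiagonal.1 hkl, Nat.cast_add]
  ring

lemma tsum_mul_le_of_le_natCast_mul {c w : ℕ → ℝ} {s : ℝ} (hc : ∀ K, 0 ≤ c K)
    (hKc : Summable fun K : ℕ => (K : ℝ) * c K) (hw : ∀ K, 0 ≤ w K) (hw0 : w 0 ≤ s)
    (hwK : ∀ K, 1 ≤ K → w K ≤ K * s) :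
    ∑' K, c K * w K ≤ (∑' K : ℕ, (K : ℝ) * c K + c 0) * s := by
  have hle : ∀ K, c (K + 1) * w (K + 1) ≤ ((K + 1 : ℕ) : ℝ) * c (K + 1) * s := fun K => by
    rw [mul_comm _ (c _), mul_assoc]
    exact mul_le_mul_of_nonneg_left (hwK _ K.succ_pos) (hc _)
  have hKc1 := (summable_nat_add_iff 1).2 hKc
  have hcw1 : Summable fun K => c (K + 1) * w (K + 1) :=
    (hKc1.mul_right s).of_nonneg_of_le (fun K => mul_nonneg (hc _) (hw _)) hle
  have htail := Summable.tsum_le_tsum hle hcw1 (hKc1.mul_right s)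
  rw [tsum_mul_right] at htail
  rw [((summable_nat_add_iff 1).1 hcw1).tsum_eq_zero_add, hKc.tsum_eq_zero_add]
  push_cast at htail ⊢
  linarith [mul_le_mul_of_nonneg_left hw0 (hc 0)]

section PowerSeriesFamily

variable {d : ℕ} {a a' : ℕ → ℕ → ℝ} {β β' : (k : ℕ) → ℕ → Fin k → EuclideanSpace ℝ (Fin d)}

noncomputable def homogeneousPart (a : ℕ → ℕ → ℝ)
    (β : (k : ℕ) → ℕ → Fin k → EuclideanSpace ℝ (Fin d)) (k : ℕ)
    (x : EuclideanSpace ℝ (Fin d)) : ℝ :=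
  ∑' v, a k v * ∏ i, ⟪β k v i, x⟫

noncomputable def productAuxCoef (a : ℕ → ℕ → ℝ)
    (β : (k : ℕ) → ℕ → Fin k → EuclideanSpace ℝ (Fin d)) (a' : ℕ → ℕ → ℝ)
    (β' : (k : ℕ) → ℕ → Fin k → EuclideanSpace ℝ (Fin d)) (K : ℕ) : ℝ :=
  ∑ kl ∈ antidiagonal K, auxCoef d a β kl.1 * auxCoef d a' β' kl.2

lemma familyFun_eq_tsum_homogeneousPart (a : ℕ → ℕ → ℝ)
    (β : (k : ℕ) → ℕ → Fin k → EuclideanSpace ℝ (Fin d)) (x : EuclideanSpace ℝ (Fin d)) :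
    familyFun d a β x = ∑' k, homogeneousPart a β k x := by
  unfold familyFun homogeneousPart
  rfl

lemma auxCoef_nonneg (a : ℕ → ℕ → ℝ) (β : (k : ℕ) → ℕ → Fin k → EuclideanSpace ℝ (Fin d))
    (k : ℕ) : 0 ≤ auxCoef d a β k :=
  tsum_nonneg fun _ => mul_nonneg (abs_nonneg _) (prod_nonneg fun _ _ => norm_nonneg _)

lemma productAuxCoef_nonneg (K : ℕ) : 0 ≤ productAuxCoef a β a' β' K :=
  sum_nonneg fun _ _ => mul_nonneg (auxCoef_nonneg _ _ _) (auxCoef_nonneg _ _ _)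

lemma abs_homogeneousPart_le {k : ℕ} {x : EuclideanSpace ℝ (Fin d)} (hx : ‖x‖ ≤ 1)
    (ha : Summable fun v => |a k v| * ∏ i, ‖β k v i‖) :
    |homogeneousPart a β k x| ≤ auxCoef d a β k := by
  rw [← Real.norm_eq_abs]
  exact tsum_of_norm_bounded ha.hasSum fun v => abs_mul_prod_inner_le hx (a k v) (β k v)

lemma hasSum_familyFun_mul {x : EuclideanSpace ℝ (Fin d)} (hx : ‖x‖ ≤ 1)
    (ha : ∀ k, Summable fun v => |a k v| * ∏ i, ‖β k v i‖)
    (ha' : ∀ k, Summable fun v => |a' k v| * ∏ i, ‖β' k v i‖)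
    (hA : Summable (auxCoef d a β)) (hA' : Summable (auxCoef d a' β')) :
    HasSum (fun K => ∑ kl ∈ antidiagonal K,
        homogeneousPart a β kl.1 x * homogeneousPart a' β' kl.2 x)
      (familyFun d a β x * familyFun d a' β' x) := by
  have hG : Summable fun k => homogeneousPart a β k x :=
    hA.of_norm_bounded fun k => abs_homogeneousPart_le hx (ha k)
  have hG' : Summable fun k => homogeneousPart a' β' k x :=
    hA'.of_norm_bounded fun k => abs_homogeneousPart_le hx (ha' k)
  have := hasSum_sum_antidiagonal_mul hG hG'
  rwa [familyFun_eq_tsum_homogeneousPart, familyFun_eq_tsum_homogeneousPart]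

lemma abs_sum_mul_familyFun_mul_le {m : Type*} [Fintype m] {x : m → EuclideanSpace ℝ (Fin d)}
    (hx : ∀ c, ‖x c‖ ≤ 1) (z : m → ℝ)
    (ha : ∀ k, Summable fun v => |a k v| * ∏ i, ‖β k v i‖)
    (ha' : ∀ k, Summable fun v => |a' k v| * ∏ i, ‖β' k v i‖)
    (hA : Summable (auxCoef d a β)) (hA' : Summable (auxCoef d a' β')) :
    |∑ c, z c * (familyFun d a β (x c) * familyFun d a' β' (x c))| ≤
      ∑' K, productAuxCoef a β a' β' K * ‖tensorPowerSum x z K‖ := by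
  have hcoef : Summable (productAuxCoef a β a' β') := (hasSum_sum_antidiagonal_mul hA hA').summable
  have hbound : Summable fun K => productAuxCoef a β a' β' K * ‖tensorPowerSum x z K‖ :=
    (hcoef.mul_right (∑ c, |z c|)).of_nonneg_of_le
      (fun K => mul_nonneg (productAuxCoef_nonneg K) (norm_nonneg _))
      fun K => mul_le_mul_of_nonneg_left (norm_tensorPowerSum_le hx z K) (productAuxCoef_nonneg K)
  rw [← Real.norm_eq_abs]
  refine (hasSum_sum fun c _ => (hasSum_familyFun_mul (hx c) ha ha' hA hA').mul_left (z c)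
    ).norm_le_of_bounded hbound.hasSum fun K => ?_
  rw [Real.norm_eq_abs, productAuxCoef, sum_mul]
  simp only [mul_sum]
  rw [sum_comm]
  refine (abs_sum_le_sum_abs _ _).trans (sum_le_sum ?_)
  rintro ⟨k, l⟩ hkl
  rw [HasAntidiagonal.mem_antidiagonal] at hkl
  subst hkl
  exact abs_sum_mul_tsum_mul_tsum_le hx z (ha k) (ha' l)

end PowerSeriesFamily

lemma summable_mul_pow_of_abs_le_one {b : ℕ → ℝ} (hb : Summable b) {t : ℝ} (ht : |t| ≤ 1) :
    Summable fun k => b k * t ^ k :=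
  hb.abs.of_norm_bounded fun k => by
    rw [Real.norm_eq_abs, abs_mul, abs_pow]
    exact mul_le_of_le_one_right (abs_nonneg _) (pow_le_one₀ (abs_nonneg t) ht)

lemma le_mul_sqrt_of_hasSum {ι : Type*} {b w : ι → ℝ} {q r : ℝ} (hb : ∀ i, 0 ≤ b i)
    (hq : HasSum (fun i => b i * w i ^ 2) q) {i : ι} (hw : 0 ≤ w i) (hr : 0 < r)
    (hbi : 1 / r ^ 2 ≤ b i) : w i ≤ r * √q := by
  have hsq : w i ^ 2 ≤ r ^ 2 * q :=
    calc w i ^ 2 = r ^ 2 * (1 / r ^ 2 * w i ^ 2) := by field_simp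
      _ ≤ r ^ 2 * (b i * w i ^ 2) := by gcongr
      _ ≤ r ^ 2 * q := by gcongr; exact le_hasSum hq i fun j _ => mul_nonneg (hb j) (sq_nonneg _)
  calc w i = √(w i ^ 2) := (Real.sqrt_sq hw).symm
    _ ≤ √(r ^ 2 * q) := Real.sqrt_le_sqrt hsq
    _ = r * √q := by rw [Real.sqrt_mul (sq_nonneg r), Real.sqrt_sq hr.le]

lemma sqrt_le_of_le_mul_sqrt {q M : ℝ} (hM : 0 ≤ M) (h : q ≤ M * √q) : √q ≤ M := by
  rcases (Real.sqrt_nonneg q).eq_or_lt with h0 | hpos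
  · rwa [← h0]
  · refine le_of_mul_le_mul_right ?_ hpos
    rwa [Real.mul_self_sqrt (Real.sqrt_pos.1 hpos).le]

/-- **Product rule for learning bounds.**
If `g` and `h` are given by multivariate power-series families with auxiliary
functions `g̃`, `h̃` such that `g̃(1), g̃′(1), h̃(1), h̃′(1)` are all finite, and
`y_c = g(x_c) h(x_c)`, then
`√(yᵀ H⁻¹ y) ≤ g̃′(1) h̃(1) + g̃(1) h̃′(1) + g̃(0) h̃(0)`. -/
theorem stmt7 (n d : ℕ) (x : Fin n → EuclideanSpace ℝ (Fin d))
    (hx : ∀ a, ‖x a‖ = 1)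
    (b : ℕ → ℝ) (hb0 : 1 ≤ b 0) (hbk : ∀ k : ℕ, 1 ≤ k → 1 / (k : ℝ) ^ 2 ≤ b k)
    (hb_sum : Summable b)
    (H : Matrix (Fin n) (Fin n) ℝ)
    (hH : ∀ a c, H a c = ∑' k : ℕ, b k * ⟪x a, x c⟫ ^ k)
    (hHpd : H.PosDef)
    (ag : ℕ → ℕ → ℝ) (βg : (k : ℕ) → ℕ → Fin k → EuclideanSpace ℝ (Fin d))
    (ah : ℕ → ℕ → ℝ) (βh : (k : ℕ) → ℕ → Fin k → EuclideanSpace ℝ (Fin d))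
    (hauxg : ∀ k : ℕ, Summable (fun v : ℕ => |ag k v| * ∏ i : Fin k, ‖βg k v i‖))
    (hauxh : ∀ k : ℕ, Summable (fun v : ℕ => |ah k v| * ∏ i : Fin k, ‖βh k v i‖))
    (hg1 : Summable (fun k : ℕ => auxCoef d ag βg k))
    (hg1' : Summable (fun k : ℕ => (k : ℝ) * auxCoef d ag βg k))
    (hh1 : Summable (fun k : ℕ => auxCoef d ah βh k))
    (hh1' : Summable (fun k : ℕ => (k : ℝ) * auxCoef d ah βh k))
    (y : Fin n → ℝ)
    (hy : ∀ c, y c = familyFun d ag βg (x c) * familyFun d ah βh (x c)) :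
    Real.sqrt (y ⬝ᵥ (H⁻¹ *ᵥ y)) ≤
      (∑' k : ℕ, (k : ℝ) * auxCoef d ag βg k) * (∑' k : ℕ, auxCoef d ah βh k) +
      (∑' k : ℕ, auxCoef d ag βg k) * (∑' k : ℕ, (k : ℝ) * auxCoef d ah βh k) +
      auxCoef d ag βg 0 * auxCoef d ah βh 0 := by
  have hx₁ : ∀ a, ‖x a‖ ≤ 1 := fun a => (hx a).le
  have hb : ∀ K, 0 ≤ b K := fun K => by
    rcases Nat.eq_zero_or_pos K with rfl | hK
    · linarith
    · exact (by positivity : (0 : ℝ) ≤ 1 / (K : ℝ) ^ 2).trans (hbk K hK)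
  have hkernel : ∀ a c, HasSum (fun k => b k * ⟪x a, x c⟫ ^ k) (H a c) := fun a c => by
    rw [hH a c]
    refine (summable_mul_pow_of_abs_le_one hb_sum ?_).hasSum
    simpa [hx] using abs_real_inner_le_norm (x a) (x c)
  set z := H⁻¹ *ᵥ y
  have hQ := hasSum_dotProduct_inv_mulVec x b hkernel (isUnit_iff_ne_zero.2 hHpd.det_pos.ne') y
  have hΦ0 : ‖tensorPowerSum x z 0‖ ≤ √(y ⬝ᵥ z) := by
    simpa using le_mul_sqrt_of_hasSum hb hQ (norm_nonneg _) one_pos (by simpa using hb0)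
  have hΦ : ∀ K, 1 ≤ K → ‖tensorPowerSum x z K‖ ≤ K * √(y ⬝ᵥ z) := fun K hK =>
    le_mul_sqrt_of_hasSum hb hQ (norm_nonneg _) (by positivity) (hbk K hK)
  have hcoef : HasSum (fun K : ℕ => (K : ℝ) * productAuxCoef ag βg ah βh K) _ :=
    hasSum_natCast_mul_sum_antidiagonal_mul hg1 hg1' hh1 hh1'
  have hyz : y ⬝ᵥ z ≤ ∑' K, productAuxCoef ag βg ah βh K * ‖tensorPowerSum x z K‖ := by
    refine le_trans (le_of_eq ?_) ((le_abs_self _).trans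
      (abs_sum_mul_familyFun_mul_le hx₁ z hauxg hauxh hg1 hh1))
    simp only [dotProduct, hy, mul_comm]
  have := sqrt_le_of_le_mul_sqrt (add_nonneg (tsum_nonneg fun K =>
      mul_nonneg K.cast_nonneg (productAuxCoef_nonneg K)) (productAuxCoef_nonneg 0))
    (hyz.trans (tsum_mul_le_of_le_natCast_mul productAuxCoef_nonneg hcoef.summable
      (fun _ => norm_nonneg _) hΦ0 hΦ))
  rwa [hcoef.tsum_eq, productAuxCoef, Finset.Nat.antidiagonal_zero, sum_singleton] at this
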